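/- For every simple graph G and every positive integer t, the Mycielskian of the t-th OR-power of G embeds as a subgraph into the t-th OR-power of the Mycielskian of G: M(G^t) ⊆ [M(G)]^t. Concretely, the map sending (v_1…v_t, h) to (v_1,h)(v_2,h)…(v_t,h) for h∈{0,1}, and sending the top vertex of M(G^t) to the constant sequence of the top vertex of M(G), is a graph embedding. -/

import Mathlib

/-- The `t`-th OR-power of a simple graph. -/
def ORpow {V : Type*} (G : SimpleGraph V) (t : ℕ) : SimpleGraph (Fin t → V) where
  Adj x y := ∃ i, G.Adj (x i) (y i)
  symm := ⟨fun _ _ ⟨i, h⟩ => ⟨i, h.symm⟩⟩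
  loopless := ⟨fun _ ⟨_, h⟩ => G.ne_of_adj h rfl⟩

/-- The Mycielskian `M(G)`: vertex set `V(G) × {0,1} ∪ {z}`, with edges
`{(v,0),(w,i)}` for `{v,w} ∈ E(G)`, `i ∈ {0,1}`, and `{z,(v,1)}` for all `v`. -/
def mycielskian {V : Type*} (G : SimpleGraph V) : SimpleGraph (V × Bool ⊕ Unit) where
  Adj x y :=
    match x, y with
    | Sum.inl (v, a), Sum.inl (w, b) => G.Adj v w ∧ (a = false ∨ b = false)
    | Sum.inl (_, b), Sum.inr _ => b = true
    | Sum.inr _, Sum.inl (_, b) => b = true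
    | Sum.inr _, Sum.inr _ => False
  symm := by
    constructor
    rintro (⟨v, a⟩ | ⟨⟩) (⟨w, b⟩ | ⟨⟩) h
    · exact ⟨h.1.symm, h.2.symm⟩
    · exact h
    · exact h
    · exact h.elim
  loopless := by
    constructor
    rintro (⟨v, a⟩ | ⟨⟩) h
    · exact G.ne_of_adj h.1 rfl
    · exact h.elim


/-- The map sending `(v₁…v_t, h)` to the sequence `(v₁,h)…(v_t,h)` and the top vertex of
`M(G^t)` to the constant sequence of the top vertex of `M(G)`. -/
def mycPowerMap {V : Type*} (t : ℕ) :
    ((Fin t → V) × Bool ⊕ Unit) → (Fin t → V × Bool ⊕ Unit)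
  | Sum.inl (x, h) => fun i => Sum.inl (x i, h)
  | Sum.inr _ => fun _ => Sum.inr ()

/-- For every graph `G` and `t ≥ 1`, the map `mycPowerMap` is a graph embedding of
`M(G^t)` into `[M(G)]^t`: it is injective and preserves both adjacency and
non-adjacency (so its image induces a copy of `M(G^t)`). -/
theorem mycielskian_ORpow_embeds {V : Type*} (G : SimpleGraph V) (t : ℕ) (ht : 1 ≤ t) :
    Function.Injective (mycPowerMap (V := V) t) ∧
    ∀ a b, (mycielskian (ORpow G t)).Adj a b ↔
      (ORpow (mycielskian G) t).Adj (mycPowerMap t a) (mycPowerMap t b) := by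
  constructor
  · rintro (⟨x, a⟩ | ⟨⟩) (⟨y, b⟩ | ⟨⟩) h
    · have h0 := congrFun h ⟨0, ht⟩
      simp only [mycPowerMap, Sum.inl.injEq, Prod.mk.injEq] at h0
      have : x = y := funext fun i => by
        have := congrFun h i
        simp only [mycPowerMap, Sum.inl.injEq, Prod.mk.injEq] at this
        exact this.1
      simp [this, h0.2]
    · exact absurd (congrFun h ⟨0, ht⟩) (by simp [mycPowerMap])
    · exact absurd (congrFun h ⟨0, ht⟩) (by simp [mycPowerMap])
    · rfl
  · rintro (⟨x, a⟩ | ⟨⟩) (⟨y, b⟩ | ⟨⟩)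
    · constructor
      · rintro ⟨⟨i, hi⟩, hab⟩
        exact ⟨i, hi, hab⟩
      · rintro ⟨i, hi, hab⟩
        exact ⟨⟨i, hi⟩, hab⟩
    · constructor
      · rintro rfl
        exact ⟨⟨0, ht⟩, rfl⟩
      · rintro ⟨i, hi⟩
        exact hi
    · constructor
      · rintro rfl
        exact ⟨⟨0, ht⟩, rfl⟩
      · rintro ⟨i, hi⟩
        exact hi
    · constructor
      · exact False.elim
      · rintro ⟨i, hi⟩
        exact hi
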